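/- Let H be a real Hilbert space, B a symmetric bilinear form with κ₁‖h‖² ≤ B(h,h) ≤ κ₂‖h‖² (0 < κ₁ ≤ κ₂), φ a continuous linear functional with B-representer α₀, θ₀ ∈ H, and θ_n, α_n ∈ H. Define the exactly-corrected estimate ψ̂_n := φ(θ_n) − B(α_n, θ_n − θ₀). Then |ψ̂_n − φ(θ₀)| ≤ κ₂ ‖α₀ − α_n‖ · ‖θ_n − θ₀‖. -/
import Mathlib

/-- Quantitative doubly robust error bound for general Hessian inner products. -/
theorem stmt_15 {H : Type*} [NormedAddCommGroup H] [InnerProductSpace ℝ H]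
    (B : H →ₗ[ℝ] H →ₗ[ℝ] ℝ) (hsymm : ∀ a b : H, B a b = B b a)
    (κ₁ κ₂ : ℝ) (hκ₁ : 0 < κ₁) (hκ₁₂ : κ₁ ≤ κ₂)
    (hlow : ∀ h : H, κ₁ * ‖h‖ ^ 2 ≤ B h h)
    (hup : ∀ h : H, B h h ≤ κ₂ * ‖h‖ ^ 2)
    (φ : H →L[ℝ] ℝ) (α₀ : H) (hrep : ∀ h : H, φ h = B α₀ h)
    (θ₀ θn αn : H) :
    |φ θn - B αn (θn - θ₀) - φ θ₀| ≤ κ₂ * ‖α₀ - αn‖ * ‖θn - θ₀‖ := by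
  set a := α₀ - αn
  set b := θn - θ₀
  have hnonneg : ∀ h : H, 0 ≤ B h h := fun h =>
    le_trans (by positivity) (hlow h)
  -- Cauchy-Schwarz for B
  have hCS : (B a b) ^ 2 ≤ B a a * B b b := by
    have hq : ∀ t : ℝ, 0 ≤ B b b * (t * t) + (2 * B a b) * t + B a a := by
      intro t
      have := hnonneg (a + t • b)
      have hexp : B (a + t • b) (a + t • b)
          = B b b * (t * t) + (2 * B a b) * t + B a a := by
        simp [map_add, map_smul, hsymm b a]
        ring
      linarith [hexp ▸ this]
    have hd := discrim_le_zero hq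
    simp only [discrim] at hd
    nlinarith
  have hbound : (B a b) ^ 2 ≤ (κ₂ * ‖a‖ * ‖b‖) ^ 2 := by
    have h1 : B a a ≤ κ₂ * ‖a‖ ^ 2 := hup a
    have h2 : B b b ≤ κ₂ * ‖b‖ ^ 2 := hup b
    have hκ₂ : 0 < κ₂ := lt_of_lt_of_le hκ₁ hκ₁₂
    nlinarith [hnonneg a, hnonneg b, norm_nonneg a, norm_nonneg b]
  have hκ₂ : 0 < κ₂ := lt_of_lt_of_le hκ₁ hκ₁₂
  have habs : |B a b| ≤ κ₂ * ‖a‖ * ‖b‖ := by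
    have hrhs : 0 ≤ κ₂ * ‖a‖ * ‖b‖ := by positivity
    exact abs_le.2 (abs_le_of_sq_le_sq' hbound hrhs)
  have key : φ θn - B αn (θn - θ₀) - φ θ₀ = B a b := by
    rw [hrep θn, hrep θ₀]
    simp [a, b, map_sub, map_add]
    ring
  rw [key]
  exact habs
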